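/- Let r and h be positive integers with r < φ^h. Then r·F_{h+2} ≤ F_{2h+2} − 1; moreover, if h is even, then r·F_{h+2} ≤ F_{2h+2} − F_{h+2} + 1 ≤ F_{2h+2} − 2. -/

import Mathlib

noncomputable def goldenphi : ℝ := (1 + Real.sqrt 5) / 2

/-!
The Lucas number `L_h = φ^h + ψ^h` is an integer, and `-1 < ψ^h`, with `0 < ψ^h` for even `h`.
So `r < φ^h` forces `r ≤ L_h`, and even `r ≤ L_h - 1` when `h` is even. Multiplying by
`F_{h+2}` and using the Binet consequence `L_h F_{h+2} = F_{2h+2} + (-1)^h` gives both bounds.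
-/

open goldenRatio

theorem goldenphi_eq_goldenRatio : goldenphi = φ := rfl

/-- The Lucas numbers `L n = F (n - 1) + F (n + 1)`, written so that no `n - 1` is needed. -/
def lucas (n : ℕ) : ℤ := 2 * Nat.fib (n + 1) - Nat.fib n

theorem goldenRatio_pow_add_goldenConj_pow_eq_lucas (n : ℕ) : φ ^ n + ψ ^ n = lucas n := by
  rw [← Real.fib_succ_sub_goldenConj_mul_fib, ← Real.fib_succ_sub_goldenRatio_mul_fib, lucas]
  push_cast
  linear_combination -(Nat.fib n : ℝ) * Real.goldenRatio_add_goldenConj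

theorem lucas_mul_fib_add_two (n : ℕ) :
    lucas n * Nat.fib (n + 2) = Nat.fib (2 * n + 2) + (-1) ^ n := by
  have h5 : √5 ≠ 0 := by positivity
  have hprod : φ ^ n * ψ ^ n = (-1) ^ n := by rw [← mul_pow, Real.goldenRatio_mul_goldenConj]
  suffices (φ ^ n + ψ ^ n) * Nat.fib (n + 2) = Nat.fib (2 * n + 2) + (-1) ^ n by
    rw [goldenRatio_pow_add_goldenConj_pow_eq_lucas] at this
    exact_mod_cast this
  rw [Real.coe_fib_eq, Real.coe_fib_eq, div_add' _ _ _ h5, mul_div_assoc', div_left_inj' h5]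
  linear_combination √5 * hprod

theorem neg_one_lt_goldenConj_pow (n : ℕ) : -1 < ψ ^ n := by
  rcases n.eq_zero_or_pos with rfl | hn
  · norm_num
  have hψ : |ψ| < 1 :=
    abs_lt.mpr ⟨Real.neg_one_lt_goldenConj, Real.goldenConj_neg.trans one_pos⟩
  exact (abs_lt.mp (abs_pow ψ n ▸ pow_lt_one₀ (abs_nonneg ψ) hψ hn.ne')).1

theorem natCast_le_lucas_of_lt_goldenRatio_pow {r n : ℕ} (hr : (r : ℝ) < φ ^ n) :
    (r : ℤ) ≤ lucas n := by
  have hL := goldenRatio_pow_add_goldenConj_pow_eq_lucas n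
  have : (r : ℝ) < lucas n + 1 := by linarith [neg_one_lt_goldenConj_pow n]
  exact Int.lt_add_one_iff.mp (by exact_mod_cast this)

theorem natCast_lt_lucas_of_lt_goldenRatio_pow {r n : ℕ} (he : Even n)
    (hr : (r : ℝ) < φ ^ n) : (r : ℤ) < lucas n := by
  have hL := goldenRatio_pow_add_goldenConj_pow_eq_lucas n
  have : (r : ℝ) < lucas n := by linarith [he.pow_pos Real.goldenConj_ne_zero (a := ψ)]
  exact_mod_cast this

theorem mul_fib_add_two_add_fib_add_two_le {r n : ℕ} (he : Even n) (hr : (r : ℝ) < φ ^ n) :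
    r * Nat.fib (n + 2) + Nat.fib (n + 2) ≤ Nat.fib (2 * n + 2) + 1 := by
  have hrL := mul_le_mul_of_nonneg_right (Int.add_one_le_iff.mpr
    (natCast_lt_lucas_of_lt_goldenRatio_pow he hr)) (Nat.cast_nonneg (Nat.fib (n + 2)))
  rw [lucas_mul_fib_add_two, he.neg_one_pow] at hrL
  zify
  linarith

theorem mul_fib_add_two_lt_fib_two_mul_add_two {r n : ℕ} (hn : 0 < n) (hr : (r : ℝ) < φ ^ n) :
    r * Nat.fib (n + 2) < Nat.fib (2 * n + 2) := by
  rcases n.even_or_odd with he | ho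
  · have := mul_fib_add_two_add_fib_add_two_le he hr
    have : 2 ≤ Nat.fib (n + 2) := le_trans (by decide : 2 ≤ Nat.fib 3) (Nat.fib_mono (by omega))
    omega
  · have hrL := mul_le_mul_of_nonneg_right (natCast_le_lucas_of_lt_goldenRatio_pow hr)
      (Nat.cast_nonneg (Nat.fib (n + 2)))
    rw [lucas_mul_fib_add_two, ho.neg_one_pow] at hrL
    zify
    linarith

theorem stmt_10_general (r h : ℕ) (hh : 0 < h)
    (hrh : (r : ℝ) < goldenphi ^ h) :
    r * Nat.fib (h + 2) ≤ Nat.fib (2 * h + 2) - 1 ∧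
    (Even h →
      r * Nat.fib (h + 2) ≤ Nat.fib (2 * h + 2) - Nat.fib (h + 2) + 1 ∧
      Nat.fib (2 * h + 2) - Nat.fib (h + 2) + 1 ≤ Nat.fib (2 * h + 2) - 2) := by
  rw [goldenphi_eq_goldenRatio] at hrh
  refine ⟨Nat.le_sub_one_of_lt (mul_fib_add_two_lt_fib_two_mul_add_two hh hrh), fun he => ?_⟩
  have h2 : 2 ≤ h := by obtain ⟨k, rfl⟩ := he; omega
  have hF : 3 ≤ Nat.fib (h + 2) :=
    le_trans (by decide : 3 ≤ Nat.fib 4) (Nat.fib_mono (by omega))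
  have hFF : Nat.fib (h + 2) ≤ Nat.fib (2 * h + 2) := Nat.fib_mono (by omega)
  have := mul_fib_add_two_add_fib_add_two_le he hrh
  omega

theorem stmt_10 (r h : ℕ) (hr : 0 < r) (hh : 0 < h)
    (hrh : (r : ℝ) < goldenphi ^ h) :
    r * Nat.fib (h + 2) ≤ Nat.fib (2 * h + 2) - 1 ∧
    (Even h →
      r * Nat.fib (h + 2) ≤ Nat.fib (2 * h + 2) - Nat.fib (h + 2) + 1 ∧
      Nat.fib (2 * h + 2) - Nat.fib (h + 2) + 1 ≤ Nat.fib (2 * h + 2) - 2) :=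
  stmt_10_general r h hh hrh
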